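/- Let $\varphi : [0,2] \to [0,2]$ be the map from the construction. Then the set $E = \bigcup_{n=1}^\infty \varphi^{-n}(0)$ is dense in $[0,2]$. -/

import Mathlib

/-- The tent map on `[0,1]`. -/
noncomputable def psi0 (t : ℝ) : ℝ := if t ≤ 1 / 2 then 2 * t else 2 - 2 * t

/-- The iterated tent map `ψ : [0,1] → [0,1]`: `ψ 0 = 0` and
`ψ t = 2⁻ⁿ ψ₀(2ⁿ t - 1)` for `t ∈ [2⁻ⁿ, 2⁻ⁿ⁺¹]` (here `n = -⌊log₂ t⌋`). -/
noncomputable def psi (t : ℝ) : ℝ :=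
  if t ≤ 0 then 0
  else (2 : ℝ) ^ (⌊Real.logb 2 t⌋) * psi0 ((2 : ℝ) ^ (-⌊Real.logb 2 t⌋) * t - 1)

/-- The map `φ : [0,2] → [0,2]`, `φ t = ψ t` on `[0,1]` and `φ t = ψ (2 - t)` on
`[1,2]`. -/
noncomputable def phi (t : ℝ) : ℝ := if t ≤ 1 then psi t else psi (2 - t)

/-! On `[1/2, 1]` the map `ψ` is the tent `t ↦ min (2t - 1) (2 - 2t)`, and `ψ (t / 2) = ψ t / 2`.
Hence `ψ` sends the dyadic grid `{p / 2^(m+1) : 0 ≤ p ≤ 2^(m+1)}` of `[0, 1]` into the grid of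
mesh `2^(-m)`, and as `φ` first folds `[1, 2]` onto `[0, 1]` by `t ↦ 2 - t`, the same holds for
`φ` on the dyadic grids of `[0, 2]`. So every point of the grid of mesh `2^(-m)` in `[0, 2]` is
sent to `0` by `φ^(m+1)`, and these grids exhaust a dense subset of `[0, 2]`. -/

lemma psi0_eq_two_mul_min (u : ℝ) : psi0 u = 2 * min u (1 - u) := by
  unfold psi0
  split_ifs with h
  · rw [min_eq_left (by linarith)]
  · rw [min_eq_right (by linarith)]; ring

lemma psi_eq_of_mem_Ico {t : ℝ} {n : ℤ} (ht : t ∈ Set.Ico ((2 : ℝ) ^ n) (2 ^ (n + 1))) :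
    psi t = 2 ^ n * psi0 (2 ^ (-n) * t - 1) := by
  have ht0 : 0 < t := (zpow_pos two_pos n).trans_le ht.1
  have hlog : ⌊Real.logb 2 t⌋ = n := by
    have h := Real.floor_logb_natCast (b := 2) ht0.le
    push_cast at h
    rw [h]
    refine le_antisymm ?_ ?_
    · have := (Int.lt_zpow_iff_log_lt (b := 2) one_lt_two ht0).1 (by exact_mod_cast ht.2)
      omega
    · exact (Int.zpow_le_iff_le_log (b := 2) one_lt_two ht0).1 (by exact_mod_cast ht.1)
  rw [psi, if_neg ht0.not_ge, hlog]

lemma psi_zero : psi 0 = 0 := by simp [psi]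

lemma psi_one : psi 1 = 0 := by
  rw [psi_eq_of_mem_Ico (n := 0) (by norm_num), psi0_eq_two_mul_min]
  norm_num

lemma psi_div_two {t : ℝ} (ht : 0 ≤ t) : psi (t / 2) = psi t / 2 := by
  rcases ht.eq_or_lt with rfl | ht
  · simp [psi_zero]
  obtain ⟨n, hn⟩ := exists_mem_Ico_zpow ht one_lt_two
  have hn' : t / 2 ∈ Set.Ico ((2 : ℝ) ^ (n - 1)) (2 ^ (n - 1 + 1)) := by
    rw [zpow_sub_one₀ two_ne_zero, sub_add_cancel]
    constructor <;> linarith [hn.1, hn.2, zpow_add_one₀ (two_ne_zero (α := ℝ)) n]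
  rw [psi_eq_of_mem_Ico hn, psi_eq_of_mem_Ico hn', zpow_sub_one₀ two_ne_zero, neg_sub,
    zpow_sub₀ two_ne_zero, zpow_neg]
  field_simp

lemma psi_of_half_le_of_lt_one {t : ℝ} (h₁ : 1 / 2 ≤ t) (h₂ : t < 1) :
    psi t = min (2 * t - 1) (2 - 2 * t) := by
  rw [psi_eq_of_mem_Ico (n := -1) ⟨by norm_num; linarith, by norm_num; linarith⟩,
    psi0_eq_two_mul_min, show 1 - (2 ^ (-(-1 : ℤ)) * t - 1) = 2 - 2 * t by norm_num; ring]
  norm_num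
  ring

def dyadicGrid (L m : ℕ) : Set ℝ := {x | ∃ p : ℕ, p ≤ L * 2 ^ m ∧ (p : ℝ) / 2 ^ m = x}

section dyadicGrid

variable {L m : ℕ} {x : ℝ}

lemma zero_mem_dyadicGrid : (0 : ℝ) ∈ dyadicGrid L m := ⟨0, Nat.zero_le _, by simp⟩

lemma dyadicGrid_subset_Icc : dyadicGrid L m ⊆ Set.Icc 0 (L : ℝ) := by
  rintro _ ⟨p, hp, rfl⟩
  refine ⟨by positivity, div_le_of_le_mul₀ (by positivity) (by positivity) ?_⟩
  exact_mod_cast hp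

lemma mem_dyadicGrid_of_le {K : ℕ} (hx : x ∈ dyadicGrid L m) (hK : x ≤ K) :
    x ∈ dyadicGrid K m := by
  obtain ⟨p, -, rfl⟩ := hx
  refine ⟨p, ?_, rfl⟩
  rw [div_le_iff₀ (by positivity)] at hK
  exact_mod_cast hK

lemma sub_mem_dyadicGrid (hx : x ∈ dyadicGrid L m) : L - x ∈ dyadicGrid L m := by
  obtain ⟨p, hp, rfl⟩ := hx
  refine ⟨L * 2 ^ m - p, Nat.sub_le _ _, ?_⟩
  rw [Nat.cast_sub hp]
  push_cast
  field_simp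

lemma div_two_mem_dyadicGrid (hx : x ∈ dyadicGrid L m) : x / 2 ∈ dyadicGrid L (m + 1) := by
  obtain ⟨p, hp, rfl⟩ := hx
  refine ⟨p, hp.trans (Nat.mul_le_mul_left _ (Nat.pow_le_pow_right two_pos m.le_succ)), ?_⟩
  rw [pow_succ, div_div]

lemma two_mul_mem_dyadicGrid (hx : x ∈ dyadicGrid L (m + 1)) : 2 * x ∈ dyadicGrid (2 * L) m := by
  obtain ⟨p, hp, rfl⟩ := hx
  refine ⟨p, by rw [pow_succ] at hp; linarith, ?_⟩
  rw [pow_succ]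
  field_simp

lemma sub_one_mem_dyadicGrid (hx : x ∈ dyadicGrid (L + 1) m) (h : 1 ≤ x) :
    x - 1 ∈ dyadicGrid L m := by
  obtain ⟨p, hp, rfl⟩ := hx
  have h2m : (0 : ℝ) < 2 ^ m := by positivity
  have hp' : 2 ^ m ≤ p := by
    rw [le_div_iff₀ h2m, one_mul] at h
    exact_mod_cast h
  refine ⟨p - 2 ^ m, by rw [add_mul] at hp; omega, ?_⟩
  rw [Nat.cast_sub hp']
  push_cast
  field_simp

end dyadicGrid

lemma Icc_subset_closure_iUnion_dyadicGrid (L : ℕ) :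
    Set.Icc 0 (L : ℝ) ⊆ closure (⋃ m, dyadicGrid L m) := by
  intro t ht
  have hlim := (tendsto_nat_floor_mul_div_atTop ht.1).comp
    (tendsto_pow_atTop_atTop_of_one_lt (one_lt_two (α := ℝ)))
  refine mem_closure_of_tendsto hlim (Filter.Eventually.of_forall fun m => ?_)
  refine Set.mem_iUnion.2 ⟨m, ⌊t * 2 ^ m⌋₊, Nat.floor_le_of_le ?_, rfl⟩
  push_cast
  exact mul_le_mul_of_nonneg_right ht.2 (by positivity)

lemma psi_eq_zero_of_mem_dyadicGrid_zero {x : ℝ} (hx : x ∈ dyadicGrid 1 0) : psi x = 0 := by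
  obtain ⟨p, hp, rfl⟩ := hx
  interval_cases p
  · simpa using psi_zero
  · simpa using psi_one

lemma psi_mem_dyadicGrid_of_half_le {m : ℕ} {x : ℝ} (hx : x ∈ dyadicGrid 1 (m + 1))
    (h : 1 / 2 ≤ x) : psi x ∈ dyadicGrid 1 m := by
  rcases (dyadicGrid_subset_Icc hx).2.lt_or_eq with hx1 | rfl
  · have hu : 2 * x - 1 ∈ dyadicGrid 1 m :=
      sub_one_mem_dyadicGrid (two_mul_mem_dyadicGrid hx) (by linarith)
    have hv : 2 - 2 * x ∈ dyadicGrid 1 m := by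
      convert sub_mem_dyadicGrid hu using 1
      push_cast
      ring
    rw [psi_of_half_le_of_lt_one h (by exact_mod_cast hx1)]
    rcases min_choice (2 * x - 1) (2 - 2 * x) with hmin | hmin <;> rw [hmin] <;> assumption
  · rw [Nat.cast_one, psi_one]
    exact zero_mem_dyadicGrid

lemma psi_mapsTo_dyadicGrid : ∀ m : ℕ, Set.MapsTo psi (dyadicGrid 1 (m + 1)) (dyadicGrid 1 m)
  | m, x, hx => by
    rcases le_or_gt (1 / 2) x with h | h
    · exact psi_mem_dyadicGrid_of_half_le hx h
    have h2x : 2 * x ∈ dyadicGrid 1 m :=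
      mem_dyadicGrid_of_le (two_mul_mem_dyadicGrid hx) (by push_cast; linarith)
    rw [show x = 2 * x / 2 by ring, psi_div_two (by linarith [(dyadicGrid_subset_Icc hx).1])]
    cases m with
    | zero =>
      rw [psi_eq_zero_of_mem_dyadicGrid_zero h2x, zero_div]
      exact zero_mem_dyadicGrid
    | succ m => exact div_two_mem_dyadicGrid (psi_mapsTo_dyadicGrid m h2x)

lemma phi_eq_psi_of_mem_dyadicGrid {m : ℕ} {x : ℝ} (hx : x ∈ dyadicGrid 2 m) :
    ∃ y ∈ dyadicGrid 1 m, phi x = psi y := by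
  by_cases h : x ≤ 1
  · exact ⟨x, mem_dyadicGrid_of_le hx (by exact_mod_cast h), by rw [phi, if_pos h]⟩
  · refine ⟨2 - x, mem_dyadicGrid_of_le (by exact_mod_cast sub_mem_dyadicGrid hx) ?_, ?_⟩
    · push_cast; linarith
    · rw [phi, if_neg h]

lemma phi_mapsTo_dyadicGrid (m : ℕ) : Set.MapsTo phi (dyadicGrid 2 (m + 1)) (dyadicGrid 2 m) := by
  intro x hx
  obtain ⟨y, hy, hxy⟩ := phi_eq_psi_of_mem_dyadicGrid hx
  have hpsi := psi_mapsTo_dyadicGrid m hy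
  rw [hxy]
  have hle := (dyadicGrid_subset_Icc hpsi).2
  push_cast at hle
  exact mem_dyadicGrid_of_le hpsi (by push_cast; linarith)

lemma iterate_phi_eq_zero_of_mem_dyadicGrid {m : ℕ} {x : ℝ} (hx : x ∈ dyadicGrid 2 m) :
    phi^[m + 1] x = 0 := by
  induction m generalizing x with
  | zero =>
    obtain ⟨y, hy, hxy⟩ := phi_eq_psi_of_mem_dyadicGrid hx
    rw [Function.iterate_one, hxy, psi_eq_zero_of_mem_dyadicGrid_zero hy]
  | succ m ih => rw [Function.iterate_succ_apply, ih (phi_mapsTo_dyadicGrid m hx)]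

/-- The set `E = ⋃_{n ≥ 1} φ⁻ⁿ(0)` is dense in `[0,2]`. -/
theorem stmt11 :
    Set.Icc (0 : ℝ) 2 ⊆
      closure {t : ℝ | t ∈ Set.Icc (0 : ℝ) 2 ∧ ∃ n : ℕ, 1 ≤ n ∧ phi^[n] t = 0} := by
  intro t ht
  refine closure_mono ?_ (Icc_subset_closure_iUnion_dyadicGrid 2 (by exact_mod_cast ht))
  intro x hx
  obtain ⟨m, hxm⟩ := Set.mem_iUnion.1 hx
  exact ⟨by exact_mod_cast dyadicGrid_subset_Icc hxm, m + 1, by omega,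
    iterate_phi_eq_zero_of_mem_dyadicGrid hxm⟩
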